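/- For every t ≥ 0, there exist constants h_1(t), h_2(t) > 0 such that for all integers k, p ≥ 1: h_2(t) · I_{k,r}(t) · I_{p,r}(t) ≤ I_{k+p,r}(t) ≤ h_1(t) · I_{k,r}(t) · I_{p,r}(t). -/

import Mathlib

/-!
Write `σ = σ_L ∗ σ_R`. Membership in `Ψ_k` constrains `σ_R` only through the ratio
`x = a_{σ_L} / b_{(σ_L)_y} ∈ (0, 1]`: `σ_R` must lie in the cut set `{τ : b_τ < x ≤ b_{τ^-}}`.
Hence `I_k(t) = Σ_{|w| = k} (p_w a_w^r)^t Q(x_w)`, where `Q(x)` sums `∏ q_{τ_i}^t` over the cut set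
of `x`. Peeling off the first letter of `τ` gives the renewal equation
`Q(x) = Σ_j q_j^t Q(x / b_j)` for `x ≤ min b_j`, so with `u` chosen such that
`Σ_j q_j^t b_j^u = 1`, `Q(x)` is comparable to `x^{-u}` uniformly on `(0, 1]`. Both `w ↦ x_w` and
`w ↦ (p_w a_w^r)^t` are multiplicative under concatenation, so every summand of `I_{k+l}` is
comparable to the product of the corresponding summands of `I_k` and `I_l`.
-/

open Filter MeasureTheory
open scoped BigOperators ENNReal NNReal Topology

namespace LGQ

noncomputable section

/-- The alphabet `G = {(i,j) : 1 ≤ i ≤ n_j, 1 ≤ j ≤ m}`, encoded as a sigma type: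
an element is `⟨j, i⟩` with `j : Fin m` (the `y`-coordinate) and `i : Fin (n j)`. -/
abbrev Alph (m : ℕ) (n : Fin m → ℕ) := Σ j : Fin m, Fin (n j)

/-- A pair `σ = (σ_L, σ_R)` with `σ_L ∈ G^*` and `σ_R ∈ G_y^*`. -/
abbrev Wd (m : ℕ) (n : Fin m → ℕ) := List (Alph m n) × List (Fin m)

variable {m : ℕ} {n : Fin m → ℕ}

/-- `a_ω := ∏ a_{i_h j_h}` along a word `ω ∈ G^*`. -/
def aP (a : Alph m n → ℝ) (w : List (Alph m n)) : ℝ := (w.map a).prod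

/-- `b_τ := ∏ b_{j_h}` along a word `τ ∈ G_y^*`. -/
def bP (b : Fin m → ℝ) (τ : List (Fin m)) : ℝ := (τ.map b).prod

/-- `σ_y := (σ_L)_y ∗ σ_R` : the `y`-word of a pair `σ = σ_L ∗ σ_R`. -/
def sy (σ : Wd m n) : List (Fin m) := σ.1.map Sigma.fst ++ σ.2

/-- `Ψ_l := {σ = σ_L ∗ σ_R : σ_L ∈ G^l, σ_R ∈ G_y^*, b_{(σ_y)^-} ≥ a_{σ_L} > b_{σ_y}}`. -/
def Psi (a : Alph m n → ℝ) (b : Fin m → ℝ) (l : ℕ) : Set (Wd m n) :=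
  {σ | σ.1.length = l ∧ 1 ≤ σ.2.length ∧
    aP a σ.1 ≤ bP b (sy σ).dropLast ∧ bP b (sy σ) < aP a σ.1}

/-- `Ψ^* := ⋃_{l ≥ 1} Ψ_l`. -/
def PsiStar (a : Alph m n → ℝ) (b : Fin m → ℝ) : Set (Wd m n) :=
  {σ | ∃ l, 1 ≤ l ∧ σ ∈ Psi a b l}

/-- `q_j := Σ_{i=1}^{n_j} p_{ij}`. -/
def qf (p : Alph m n → ℝ) (j : Fin m) : ℝ := ∑ i : Fin (n j), p ⟨j, i⟩

/-- `p_{σ_L} := ∏ p_{i_h j_h}`. -/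
def pP (p : Alph m n → ℝ) (w : List (Alph m n)) : ℝ := (w.map p).prod

/-- `q_{σ_R} := ∏ q_{j_h}`. -/
def qP (p : Alph m n → ℝ) (τ : List (Fin m)) : ℝ := (τ.map (qf p)).prod

/-- `E_r(σ) := p_{σ_L} q_{σ_R} a_{σ_L}^r` (note `E_r(θ) = 1`). -/
def Er (a p : Alph m n → ℝ) (r : ℝ) (σ : Wd m n) : ℝ :=
  pP p σ.1 * qP p σ.2 * aP a σ.1 ^ r

/-- `a̲ := min a_{ij}`. -/
def aLo (a : Alph m n → ℝ) : ℝ := ⨅ g, a g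

/-- `ā := max a_{ij}`. -/
def aHi (a : Alph m n → ℝ) : ℝ := ⨆ g, a g

/-- `b̲ := min b_j`. -/
def bLo (b : Fin m → ℝ) : ℝ := ⨅ j, b j

/-- `b̄ := max b_j`. -/
def bHi (b : Fin m → ℝ) : ℝ := ⨆ j, b j

/-- `p̲ := min p_{ij}`. -/
def pLo (p : Alph m n → ℝ) : ℝ := ⨅ g, p g

/-- `q̲ := min q_j`. -/
def qLo (p : Alph m n → ℝ) : ℝ := ⨅ j, qf p j

/-- `A_1 := ⌊log a̲ / log b̄⌋ + 1`. -/
def A1 (a : Alph m n → ℝ) (b : Fin m → ℝ) : ℤ :=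
  ⌊Real.log (aLo a) / Real.log (bHi b)⌋ + 1

/-- `A_2 := ⌊log b̲ / log ā⌋ + 1`. -/
def A2 (a : Alph m n → ℝ) (b : Fin m → ℝ) : ℤ :=
  ⌊Real.log (bLo b) / Real.log (aHi a)⌋ + 1

/-- `A_3 := max_{(i,j)∈G} a_{ij}/b_j`. -/
def A3 (a : Alph m n → ℝ) (b : Fin m → ℝ) : ℝ := ⨆ g : Alph m n, a g / b g.1

/-- `A_4 := log A_3 / log b̲`. -/
def A4 (a : Alph m n → ℝ) (b : Fin m → ℝ) : ℝ := Real.log (A3 a b) / Real.log (bLo b)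

/-- `A_6 := ⌊1/A_4⌋`. -/
def A6 (a : Alph m n → ℝ) (b : Fin m → ℝ) : ℤ := ⌊1 / A4 a b⌋

/-- `η̲_r := p̲ q̲^{A_1} a̲^r`. -/
def etaLo (a : Alph m n → ℝ) (b : Fin m → ℝ) (p : Alph m n → ℝ) (r : ℝ) : ℝ :=
  pLo p * qLo p ^ A1 a b * aLo a ^ r

/-- `A_{5,r} := ⌊log(q̲² η̲_r)/(r·log ā)⌋`. -/
def A5 (a : Alph m n → ℝ) (b : Fin m → ℝ) (p : Alph m n → ℝ) (r : ℝ) : ℤ :=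
  ⌊Real.log (qLo p ^ 2 * etaLo a b p r) / (r * Real.log (aHi a))⌋

/-- `T_{1,r} := ⌊(A_1 + A_{5,r} + 3)/A_4⌋`. -/
def T1 (a : Alph m n → ℝ) (b : Fin m → ℝ) (p : Alph m n → ℝ) (r : ℝ) : ℤ :=
  ⌊((A1 a b + A5 a b p r + 3 : ℤ) : ℝ) / A4 a b⌋

/-- `ρ = σ^♭`:  for `σ ∈ Ψ_1`, `σ^♭ = θ`; for `σ ∈ Ψ_l` with `l ≥ 2`, `σ^♭` is the unique
`ρ ∈ Ψ_{l-1}` with `ρ_L = (σ_L)^-` and `ρ_y` an initial segment of `σ_y`. -/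
def IsFlat (a : Alph m n → ℝ) (b : Fin m → ℝ) (σ ρ : Wd m n) : Prop :=
  (σ.1.length = 1 ∧ ρ = (([], []) : Wd m n)) ∨
  (2 ≤ σ.1.length ∧ ρ ∈ Psi a b (σ.1.length - 1) ∧ ρ.1 = σ.1.dropLast ∧ sy ρ <+: sy σ)

/-- `Λ_{n,r} := {σ ∈ Ψ^* : E_r(σ^♭) ≥ η̲_r^n > E_r(σ)}`. -/
def Lam (a : Alph m n → ℝ) (b : Fin m → ℝ) (p : Alph m n → ℝ) (r : ℝ) (N : ℕ) :
    Set (Wd m n) :=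
  {σ | σ ∈ PsiStar a b ∧ ∃ ρ : Wd m n, IsFlat a b σ ρ ∧
    etaLo a b p r ^ N ≤ Er a p r ρ ∧ Er a p r σ < etaLo a b p r ^ N}

/-- `S_{n,r} := {σ ∈ Ψ^* : η̲_r^{n+1} ≤ E_r(σ) < η̲_r^n}`. -/
def Snr (a : Alph m n → ℝ) (b : Fin m → ℝ) (p : Alph m n → ℝ) (r : ℝ) (N : ℕ) :
    Set (Wd m n) :=
  {σ | σ ∈ PsiStar a b ∧ etaLo a b p r ^ (N + 1) ≤ Er a p r σ ∧
    Er a p r σ < etaLo a b p r ^ N}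

/-- `G_1(σ) := {ω ∈ S_{n,r} : σ_L ⪯ ω_L and σ_y ⪯ ω_y}`. -/
def G1 (a : Alph m n → ℝ) (b : Fin m → ℝ) (p : Alph m n → ℝ) (r : ℝ) (N : ℕ)
    (σ : Wd m n) : Set (Wd m n) :=
  {ω | ω ∈ Snr a b p r N ∧ σ.1 <+: ω.1 ∧ sy σ <+: sy ω}

/-- `Λ_h(σ) := {ρ ∈ Φ_{l+h} : σ ⪯ ρ}` (componentwise order on pairs). -/
def LamH (a : Alph m n → ℝ) (b : Fin m → ℝ) (σ : Wd m n) (h : ℕ) : Set (Wd m n) :=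
  {ρ | ρ ∈ Psi a b (σ.1.length + h) ∧ σ.1 <+: ρ.1 ∧ σ.2 <+: ρ.2}

/-- `I_{k,r}(t) := Σ_{ω∈Φ_k} E_r(ω)^t`. -/
def Ih (a : Alph m n → ℝ) (b : Fin m → ℝ) (p : Alph m n → ℝ) (r : ℝ) (k : ℕ) (t : ℝ) : ℝ :=
  ∑' ω : Psi a b k, Er a p r ω.1 ^ t

/-- `Υ_n(t,s) := Σ_{σ∈Ψ_n} (p_{σ_L} q_{σ_R})^t a_{σ_L}^s`. -/
def Ups (a : Alph m n → ℝ) (b : Fin m → ℝ) (p : Alph m n → ℝ) (N : ℕ) (t s : ℝ) : ℝ :=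
  ∑' σ : Psi a b N, (pP p σ.1.1 * qP p σ.1.2) ^ t * aP a σ.1.1 ^ s

/-- `τ_0 := ((1,j_0),(n_{j_0},j_0))`. -/
def tau0 (j0 : Fin m) (h : 2 ≤ n j0) : List (Alph m n) :=
  [⟨j0, ⟨0, by omega⟩⟩, ⟨j0, ⟨n j0 - 1, by omega⟩⟩]

/-- `σ̄` is a bar-extension of `σ ∈ Ψ_l`: `σ̄ ∈ Ψ_{l+2}`, `σ̄_L = σ_L ∗ τ_0`, `σ_R ⪯ σ̄_R`. -/
def BarExt (a : Alph m n → ℝ) (b : Fin m → ℝ) (j0 : Fin m) (h : 2 ≤ n j0)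
    (σ σb : Wd m n) : Prop :=
  σb ∈ Psi a b (σ.1.length + 2) ∧ σb.1 = σ.1 ++ tau0 j0 h ∧ σ.2 <+: σb.2

/-- cylinder set `[σ] ⊆ Φ_∞ = G^ℕ × G_y^ℕ`. -/
def Cyl (σ : Wd m n) : Set ((ℕ → Alph m n) × (ℕ → Fin m)) :=
  {x | (∀ i : ℕ, ∀ hi : i < σ.1.length, x.1 i = σ.1.get ⟨i, hi⟩) ∧
       (∀ i : ℕ, ∀ hi : i < σ.2.length, x.2 i = σ.2.get ⟨i, hi⟩)}

/-- the affine map `f_{ij}(x,y) = (a_{ij} x + c_{ij}, b_j y + d_j)`. -/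
def fmap (a : Alph m n → ℝ) (b : Fin m → ℝ) (c : Alph m n → ℝ) (d : Fin m → ℝ)
    (g : Alph m n) : ℝ × ℝ → ℝ × ℝ :=
  fun x => (a g * x.1 + c g, b g.1 * x.2 + d g.1)

/-- `A_{L,σ} = c_{i_1j_1} + Σ_{p≥2} (∏_{h<p} a_{i_hj_h}) c_{i_pj_p}`. -/
def xL (a c : Alph m n → ℝ) : List (Alph m n) → ℝ
  | [] => 0
  | g :: w => c g + a g * xL a c w

/-- `B_{L,σ} = d_{j_1} + Σ_{p≥2} (∏_{h<p} b_{j_h}) d_{j_p}`. -/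
def yL (b d : Fin m → ℝ) : List (Fin m) → ℝ
  | [] => 0
  | j :: τ => d j + b j * yL b d τ

/-- the approximate square `F_σ = [A_{L,σ}, A_{L,σ}+a_{σ_L}] × [B_{L,σ}, B_{L,σ}+b_{σ_y}]`. -/
def Fsq (a c : Alph m n → ℝ) (b d : Fin m → ℝ) (σ : Wd m n) : Set (ℝ × ℝ) :=
  Set.Icc (xL a c σ.1) (xL a c σ.1 + aP a σ.1) ×ˢ
    Set.Icc (yL b d (sy σ)) (yL b d (sy σ) + bP b (sy σ))

/-- the Euclidean distance on `ℝ²`. -/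
def eudist (x y : ℝ × ℝ) : ℝ := Real.sqrt ((x.1 - y.1) ^ 2 + (x.2 - y.2) ^ 2)

/-- the horizontal distance `d_h(S,T) = inf{|x-x'| : (x,y)∈S, (x',y')∈T}`. -/
def dH (S T : Set (ℝ × ℝ)) : ℝ := sInf {e | ∃ x ∈ S, ∃ y ∈ T, e = |x.1 - y.1|}

/-- the (Euclidean) diameter of a subset of `ℝ²`. -/
def euDiam (S : Set (ℝ × ℝ)) : ℝ := sSup {e | ∃ x ∈ S, ∃ y ∈ S, e = eudist x y}

/-- the `N`-th quantization error of order `r`. -/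
def qerr (μ : Measure (ℝ × ℝ)) (r : ℝ) (N : ℕ) : ℝ :=
  sInf {e : ℝ | ∃ α : Finset (ℝ × ℝ), ∃ hα : α.Nonempty, α.card ≤ N ∧
    e = (∫ x, α.inf' hα (fun y => eudist x y ^ r) ∂μ) ^ (1 / r)}

/-- the topological support of a measure on `ℝ²`. -/
def suppSet (μ : Measure (ℝ × ℝ)) : Set (ℝ × ℝ) :=
  {x | ∀ U : Set (ℝ × ℝ), IsOpen U → x ∈ U → μ U ≠ 0}

/-- the dyadic square `[k 2^{-N}, (k+1) 2^{-N}) × [k' 2^{-N}, (k'+1) 2^{-N})`. -/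
def Dy (N : ℕ) (k : ℤ × ℤ) : Set (ℝ × ℝ) :=
  Set.Ico ((k.1 : ℝ) * (2 : ℝ) ^ (-(N : ℤ))) (((k.1 : ℝ) + 1) * (2 : ℝ) ^ (-(N : ℤ))) ×ˢ
    Set.Ico ((k.2 : ℝ) * (2 : ℝ) ^ (-(N : ℤ))) (((k.2 : ℝ) + 1) * (2 : ℝ) ^ (-(N : ℤ)))



theorem prod_map_nonneg {α : Type*} {f : α → ℝ} (hf : ∀ x, 0 ≤ f x) (l : List α) :
    0 ≤ (l.map f).prod :=
  List.prod_nonneg <| List.forall_mem_map.2 fun x _ => hf x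

theorem prod_map_pos {α : Type*} {f : α → ℝ} (hf : ∀ x, 0 < f x) (l : List α) :
    0 < (l.map f).prod :=
  List.prod_pos <| List.forall_mem_map.2 fun x _ => hf x

theorem exists_nonneg_lt_one_forall_le {ι : Type*} [Finite ι] {b : ι → ℝ} (hb : ∀ i, b i < 1) :
    ∃ B, 0 ≤ B ∧ B < 1 ∧ ∀ i, b i ≤ B := by
  rcases isEmpty_or_nonempty ι with hι | hι
  · exact ⟨0, le_rfl, one_pos, isEmptyElim⟩
  · obtain ⟨i₀, hi₀⟩ := Finite.exists_max b
    exact ⟨max (b i₀) 0, le_max_right _ _, max_lt (hb i₀) one_pos,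
      fun i => (hi₀ i).trans (le_max_left _ _)⟩

theorem exists_sum_mul_rpow_eq_one {ι : Type*} [Fintype ι] [Nonempty ι] {b c : ι → ℝ}
    (hb0 : ∀ i, 0 < b i) (hb1 : ∀ i, b i < 1) (hc : ∀ i, 0 < c i) :
    ∃ u : ℝ, ∑ i, c i * b i ^ u = 1 := by
  obtain ⟨i₀⟩ := ‹Nonempty ι›
  have hcont : Continuous fun u : ℝ => ∑ i, c i * b i ^ u :=
    continuous_finsetSum _ fun i _ =>
      continuous_const.mul (continuous_const.rpow continuous_id fun _ => Or.inl (hb0 i).ne')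
  have hzero : Tendsto (fun u : ℝ => ∑ i, c i * b i ^ u) atTop (𝓝 0) := by
    simpa using tendsto_finsetSum Finset.univ fun i _ =>
      (tendsto_rpow_atTop_of_base_lt_one (b i) (by linarith [hb0 i]) (hb1 i)).const_mul (c i)
  have hinf : Tendsto (fun u : ℝ => ∑ i, c i * b i ^ u) atBot atTop :=
    tendsto_atTop_mono (fun u => Finset.single_le_sum (f := fun i => c i * b i ^ u)
        (fun i _ => by have := hb0 i; have := hc i; positivity) (Finset.mem_univ i₀))
      ((tendsto_rpow_atBot_of_base_lt_one _ (hb0 i₀) (hb1 i₀)).const_mul_atTop (hc i₀))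
  exact mem_range_of_exists_le_of_exists_ge hcont
    (hzero.eventually (eventually_le_nhds one_pos)).exists
    (hinf.eventually (eventually_ge_atTop 1)).exists

theorem renewal_bounds {ι : Type*} [Fintype ι] {Q : ℝ → ℝ} {b c : ι → ℝ} {u β K₀ K₁ : ℝ}
    (hβ : 0 < β) (hβb : ∀ i, β ≤ b i) (hb1 : ∀ i, b i < 1) (hc : ∀ i, 0 ≤ c i)
    (hu : ∑ i, c i * b i ^ u = 1)
    (hrec : ∀ x, 0 < x → x ≤ β → Q x = ∑ i, c i * Q (x / b i))
    (hbase : ∀ x, β < x → x ≤ 1 → K₀ * x ^ (-u) ≤ Q x ∧ Q x ≤ K₁ * x ^ (-u))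
    {x : ℝ} (hx0 : 0 < x) (hx1 : x ≤ 1) :
    K₀ * x ^ (-u) ≤ Q x ∧ Q x ≤ K₁ * x ^ (-u) := by
  obtain ⟨B, hB0, hB1, hbB⟩ := exists_nonneg_lt_one_forall_le hb1
  obtain ⟨N, hN⟩ := exists_pow_lt_of_lt_one hx0 hB1
  induction N generalizing x with
  | zero => rw [pow_zero] at hN; exact absurd hx1 hN.not_ge
  | succ N ih =>
    rcases lt_or_ge β x with hβx | hxβ
    · exact hbase x hβx hx1
    have hb0 i : 0 < b i := hβ.trans_le (hβb i)
    have hdiv i : (x / b i) ^ (-u) = b i ^ u * x ^ (-u) := by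
      rw [Real.div_rpow hx0.le (hb0 i).le, Real.rpow_neg (hb0 i).le, div_inv_eq_mul, mul_comm]
    -- by the choice of `u`, `x ^ (-u)` itself solves the recursion
    have hsplit (K : ℝ) : K * x ^ (-u) = ∑ i, c i * (K * (x / b i) ^ (-u)) := by
      simp_rw [hdiv]
      rw [← one_mul (K * _), ← hu, Finset.sum_mul]
      exact Finset.sum_congr rfl fun i _ => by ring
    have hih i := ih (div_pos hx0 (hb0 i)) ((div_le_one (hb0 i)).2 (hxβ.trans (hβb i))) <| by
      rw [lt_div_iff₀ (hb0 i)]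
      calc B ^ N * b i ≤ B ^ N * B := mul_le_mul_of_nonneg_left (hbB i) (pow_nonneg hB0 N)
        _ < x := by rwa [← pow_succ]
    rw [hrec x hx0 hxβ, hsplit K₀, hsplit K₁]
    exact ⟨Finset.sum_le_sum fun i _ => mul_le_mul_of_nonneg_left (hih i).1 (hc i),
      Finset.sum_le_sum fun i _ => mul_le_mul_of_nonneg_left (hih i).2 (hc i)⟩

theorem rpow_mem_Icc_min_max {β x : ℝ} (hβ : 0 < β) (hβx : β ≤ x) (hx1 : x ≤ 1) (v : ℝ) :
    min (β ^ v) 1 ≤ x ^ v ∧ x ^ v ≤ max (β ^ v) 1 := by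
  have hx0 : 0 < x := hβ.trans_le hβx
  rcases le_or_gt 0 v with hv | hv
  · exact ⟨(min_le_left _ _).trans (Real.rpow_le_rpow hβ.le hβx hv),
      (Real.rpow_le_one hx0.le hx1 hv).trans (le_max_right _ _)⟩
  · exact ⟨(min_le_right _ _).trans (Real.one_le_rpow_of_pos_of_le_one_of_nonpos hx0 hx1 hv.le),
      (Real.rpow_le_rpow_of_nonpos hβ hβx hv.le).trans (le_max_left _ _)⟩

theorem mul_bounds_of_rpow_bounds {Q : ℝ → ℝ} {u c C : ℝ} (hc : 0 < c)
    (hQ : ∀ x, 0 < x → x ≤ 1 → c * x ^ (-u) ≤ Q x ∧ Q x ≤ C * x ^ (-u))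
    {x y : ℝ} (hx0 : 0 < x) (hx1 : x ≤ 1) (hy0 : 0 < y) (hy1 : y ≤ 1) :
    c / C ^ 2 * (Q x * Q y) ≤ Q (x * y) ∧ Q (x * y) ≤ C / c ^ 2 * (Q x * Q y) := by
  obtain ⟨hx, hx'⟩ := hQ x hx0 hx1
  obtain ⟨hy, hy'⟩ := hQ y hy0 hy1
  obtain ⟨hxy, hxy'⟩ := hQ (x * y) (mul_pos hx0 hy0) (mul_le_one₀ hx1 hy0.le hy1)
  have hφx : 0 ≤ x ^ (-u) := Real.rpow_nonneg hx0.le _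
  have hφy : 0 ≤ y ^ (-u) := Real.rpow_nonneg hy0.le _
  have hC : 0 < C := hc.trans_le <|
    le_of_mul_le_mul_right (hx.trans hx') (Real.rpow_pos_of_pos hx0 _)
  have hQx : 0 ≤ Q x := (mul_nonneg hc.le hφx).trans hx
  have hQy : 0 ≤ Q y := (mul_nonneg hc.le hφy).trans hy
  rw [Real.mul_rpow hx0.le hy0.le] at hxy hxy'
  constructor
  · calc c / C ^ 2 * (Q x * Q y) ≤ c / C ^ 2 * ((C * x ^ (-u)) * (C * y ^ (-u))) := by
          gcongr
      _ = c * (x ^ (-u) * y ^ (-u)) := by field_simp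
      _ ≤ Q (x * y) := hxy
  · calc Q (x * y) ≤ C * (x ^ (-u) * y ^ (-u)) := hxy'
      _ = C / c ^ 2 * ((c * x ^ (-u)) * (c * y ^ (-u))) := by field_simp
      _ ≤ C / c ^ 2 * (Q x * Q y) := by gcongr

theorem mul_comp_append_bounds {α : Type*} {W ρ : List α → ℝ} {Q : ℝ → ℝ} {u c C : ℝ}
    (hc : 0 < c) (hQ : ∀ x, 0 < x → x ≤ 1 → c * x ^ (-u) ≤ Q x ∧ Q x ≤ C * x ^ (-u))
    (hW0 : ∀ w, 0 ≤ W w) (hW : ∀ w w', W (w ++ w') = W w * W w')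
    (hρ0 : ∀ w, 0 < ρ w) (hρ1 : ∀ w, ρ w ≤ 1) (hρ : ∀ w w', ρ (w ++ w') = ρ w * ρ w')
    (w w' : List α) :
    c / C ^ 2 * (W w * Q (ρ w) * (W w' * Q (ρ w'))) ≤ W (w ++ w') * Q (ρ (w ++ w')) ∧
      W (w ++ w') * Q (ρ (w ++ w')) ≤ C / c ^ 2 * (W w * Q (ρ w) * (W w' * Q (ρ w'))) := by
  obtain ⟨hlo, hhi⟩ := mul_bounds_of_rpow_bounds hc hQ (hρ0 w) (hρ1 w) (hρ0 w') (hρ1 w')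
  have hWW := mul_nonneg (hW0 w) (hW0 w')
  rw [hW, hρ]
  constructor
  · calc c / C ^ 2 * (W w * Q (ρ w) * (W w' * Q (ρ w')))
        = W w * W w' * (c / C ^ 2 * (Q (ρ w) * Q (ρ w'))) := by ring
      _ ≤ W w * W w' * Q (ρ w * ρ w') := mul_le_mul_of_nonneg_left hlo hWW
  · calc W w * W w' * Q (ρ w * ρ w')
        ≤ W w * W w' * (C / c ^ 2 * (Q (ρ w) * Q (ρ w'))) := mul_le_mul_of_nonneg_left hhi hWW
      _ = C / c ^ 2 * (W w * Q (ρ w) * (W w' * Q (ρ w'))) := by ring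

def words (α : Type*) [Finite α] (k : ℕ) : Finset (List α) :=
  (List.finite_length_eq α k).toFinset

@[simp]
theorem mem_words {α : Type*} [Finite α] {k : ℕ} {w : List α} : w ∈ words α k ↔ w.length = k :=
  Set.Finite.mem_toFinset _

theorem sum_words_add {α M : Type*} [Finite α] [AddCommMonoid M] (f : List α → M) (k l : ℕ) :
    ∑ v ∈ words α (k + l), f v = ∑ w ∈ words α k, ∑ w' ∈ words α l, f (w ++ w') := by
  rw [← Finset.sum_product']
  symm
  refine Finset.sum_nbij' (fun z => z.1 ++ z.2) (fun v => (v.take k, v.drop k)) ?_ ?_ ?_ ?_ ?_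
  all_goals intro z hz
  all_goals simp only [Finset.mem_product, mem_words] at hz
  · simp [hz.1, hz.2]
  · simp [hz]
  · simp [List.take_left' hz.1, List.drop_left' hz.1]
  · exact List.take_append_drop k z
  · rfl

theorem sum_words_add_bounds {α : Type*} [Finite α] {f : List α → ℝ} {c C : ℝ}
    (hf : ∀ w w', c * (f w * f w') ≤ f (w ++ w') ∧ f (w ++ w') ≤ C * (f w * f w')) (k l : ℕ) :
    c * ((∑ w ∈ words α k, f w) * ∑ w ∈ words α l, f w) ≤ ∑ w ∈ words α (k + l), f w ∧
      ∑ w ∈ words α (k + l), f w ≤ C * ((∑ w ∈ words α k, f w) * ∑ w ∈ words α l, f w) := by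
  simp_rw [sum_words_add, Finset.sum_mul_sum, Finset.mul_sum]
  exact ⟨Finset.sum_le_sum fun w _ => Finset.sum_le_sum fun w' _ => (hf w w').1,
    Finset.sum_le_sum fun w _ => Finset.sum_le_sum fun w' _ => (hf w w').2⟩

def cutSet (b : Fin m → ℝ) (x : ℝ) : Set (List (Fin m)) :=
  {τ | 1 ≤ τ.length ∧ bP b τ < x ∧ x ≤ bP b τ.dropLast}

def cutSum (b c : Fin m → ℝ) (x : ℝ) : ℝ :=
  ∑' τ : cutSet b x, (τ.1.map c).prod

section cut
variable {b c : Fin m → ℝ}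

@[simp]
theorem bP_append (τ ρ : List (Fin m)) : bP b (τ ++ ρ) = bP b τ * bP b ρ := by
  simp [bP]

theorem bP_pos (hb0 : ∀ j, 0 < b j) (τ : List (Fin m)) : 0 < bP b τ :=
  prod_map_pos hb0 τ

theorem bP_le_pow {B : ℝ} (hb0 : ∀ j, 0 ≤ b j) (hbB : ∀ j, b j ≤ B) (τ : List (Fin m)) :
    bP b τ ≤ B ^ τ.length := by
  simpa [bP] using List.prod_map_le_prod_map₀ b (fun _ => B) (fun j _ => hb0 j) (fun j _ => hbB j)

theorem length_le_of_mem_cutSet {B x : ℝ} {N : ℕ} (hb0 : ∀ j, 0 ≤ b j) (hbB : ∀ j, b j ≤ B)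
    (hB0 : 0 ≤ B) (hB1 : B ≤ 1) (hN : B ^ N < x) {τ : List (Fin m)} (hτ : τ ∈ cutSet b x) :
    τ.length ≤ N := by
  by_contra! hlen
  have := calc x ≤ bP b τ.dropLast := hτ.2.2
    _ ≤ B ^ (τ.length - 1) := by simpa using bP_le_pow hb0 hbB τ.dropLast
    _ ≤ B ^ N := pow_le_pow_of_le_one hB0 hB1 (by omega)
  linarith

theorem cutSet_finite (hb0 : ∀ j, 0 < b j) (hb1 : ∀ j, b j < 1) (x : ℝ) :
    (cutSet b x).Finite := by
  rcases le_or_gt x 0 with hx | hx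
  · refine Set.finite_empty.subset fun τ hτ => ?_
    exact absurd (hτ.2.1.trans_le hx) (bP_pos hb0 τ).not_gt
  · obtain ⟨B, hB0, hB1, hbB⟩ := exists_nonneg_lt_one_forall_le hb1
    obtain ⟨N, hN⟩ := exists_pow_lt_of_lt_one hx hB1
    exact (List.finite_length_le _ N).subset fun τ hτ =>
      length_le_of_mem_cutSet (fun j => (hb0 j).le) hbB hB0 hB1.le hN hτ

theorem cutSet_nonempty [NeZero m] (hb0 : ∀ j, 0 < b j) (hb1 : ∀ j, b j < 1) {x : ℝ}
    (hx0 : 0 < x) (hx1 : x ≤ 1) : (cutSet b x).Nonempty := by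
  obtain ⟨N, hlt, hle⟩ := exists_nat_pow_near_of_lt_one hx0 hx1 (hb0 0) (hb1 0)
  exact ⟨List.replicate (N + 1) 0, by simp, by simpa [bP] using hlt,
    by simpa [bP, List.dropLast_replicate] using hle⟩

theorem mem_cutSet_iff_cons (hb0 : ∀ j, 0 < b j) {x : ℝ} (hxb : ∀ j, x ≤ b j)
    {τ : List (Fin m)} : τ ∈ cutSet b x ↔ ∃ j ρ, τ = j :: ρ ∧ ρ ∈ cutSet b (x / b j) := by
  constructor
  · rintro ⟨hlen, hlt, hle⟩
    obtain ⟨j, ρ, rfl⟩ := List.exists_cons_of_length_pos hlen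
    have hρ : ρ ≠ [] := by
      rintro rfl
      exact (hxb j).not_gt (by simpa [bP] using hlt)
    refine ⟨j, ρ, rfl, List.length_pos_of_ne_nil hρ, ?_, ?_⟩
    · rw [lt_div_iff₀ (hb0 j), mul_comm]
      simpa [bP] using hlt
    · rw [div_le_iff₀ (hb0 j), mul_comm]
      simpa [bP, List.dropLast_cons_of_ne_nil hρ] using hle
  · rintro ⟨j, ρ, rfl, hlen, hlt, hle⟩
    have hρ : ρ ≠ [] := List.ne_nil_of_length_pos hlen
    rw [lt_div_iff₀ (hb0 j), mul_comm] at hlt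
    rw [div_le_iff₀ (hb0 j), mul_comm] at hle
    exact ⟨by simp, by simpa [bP] using hlt, by simpa [bP, List.dropLast_cons_of_ne_nil hρ] using hle⟩

theorem cutSum_eq_sum (hb0 : ∀ j, 0 < b j) (hb1 : ∀ j, b j < 1) (x : ℝ) :
    cutSum b c x = ∑ τ ∈ (cutSet_finite hb0 hb1 x).toFinset, (τ.map c).prod := by
  rw [← Finset.tsum_subtype', Set.Finite.coe_toFinset, cutSum]

theorem cutSum_eq_sum_mul_cutSum_div (hb0 : ∀ j, 0 < b j) (hb1 : ∀ j, b j < 1) {x : ℝ}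
    (hxb : ∀ j, x ≤ b j) : cutSum b c x = ∑ j, c j * cutSum b c (x / b j) := by
  simp_rw [cutSum_eq_sum hb0 hb1, Finset.mul_sum, Finset.sum_sigma']
  symm
  refine Finset.sum_bij (fun z _ => z.1 :: z.2) ?_ ?_ ?_ ?_
  · rintro ⟨j, ρ⟩ hz
    simp only [Finset.mem_sigma, Set.Finite.mem_toFinset] at hz ⊢
    exact (mem_cutSet_iff_cons hb0 hxb).2 ⟨j, ρ, rfl, hz.2⟩
  · rintro ⟨j, ρ⟩ - ⟨j', ρ'⟩ - h
    obtain ⟨rfl, rfl⟩ := List.cons_eq_cons.1 h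
    rfl
  · intro τ hτ
    obtain ⟨j, ρ, rfl, hρ⟩ := (mem_cutSet_iff_cons hb0 hxb).1 ((Set.Finite.mem_toFinset _).1 hτ)
    exact ⟨⟨j, ρ⟩, by simpa using hρ, rfl⟩
  · intro z _
    simp

theorem exists_cutSum_bounds_of_lt [NeZero m] (hb0 : ∀ j, 0 < b j) (hb1 : ∀ j, b j < 1)
    (hc : ∀ j, 0 < c j) {β : ℝ} (hβ : 0 < β) :
    ∃ K₀ K₁, 0 < K₀ ∧ 0 < K₁ ∧ ∀ x, β < x → x ≤ 1 → K₀ ≤ cutSum b c x ∧ cutSum b c x ≤ K₁ := by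
  obtain ⟨B, hB0, hB1, hbB⟩ := exists_nonneg_lt_one_forall_le hb1
  obtain ⟨L, hL⟩ := exists_pow_lt_of_lt_one hβ hB1
  -- for `x > β` every word of the cut has length at most `L`
  set S := (List.finite_length_le (Fin m) L).toFinset
  have hS : [] ∈ S := by simp [S]
  have hpos := prod_map_pos hc
  refine ⟨S.inf' ⟨_, hS⟩ fun τ => (τ.map c).prod, ∑ τ ∈ S, (τ.map c).prod,
    (Finset.lt_inf'_iff _).2 fun τ _ => hpos τ, Finset.sum_pos (fun τ _ => hpos τ) ⟨_, hS⟩,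
    fun x hβx hx1 => ?_⟩
  have hsub : (cutSet_finite hb0 hb1 x).toFinset ⊆ S := fun τ hτ => by
    simpa [S] using length_le_of_mem_cutSet (fun j => (hb0 j).le) hbB hB0 hB1.le
      (hL.trans hβx) ((Set.Finite.mem_toFinset _).1 hτ)
  obtain ⟨τ₀, hτ₀⟩ := cutSet_nonempty hb0 hb1 (hβ.trans hβx) hx1
  have hτ₀' : τ₀ ∈ (cutSet_finite hb0 hb1 x).toFinset := (Set.Finite.mem_toFinset _).2 hτ₀
  rw [cutSum_eq_sum hb0 hb1]
  exact ⟨(S.inf'_le _ (hsub hτ₀')).trans (Finset.single_le_sum (fun τ _ => (hpos τ).le) hτ₀'),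
    Finset.sum_le_sum_of_subset_of_nonneg hsub fun τ _ _ => (hpos τ).le⟩

theorem exists_cutSum_rpow_bounds [NeZero m] (hb0 : ∀ j, 0 < b j) (hb1 : ∀ j, b j < 1)
    (hc : ∀ j, 0 < c j) :
    ∃ u c₀ C₀ : ℝ, 0 < c₀ ∧ 0 < C₀ ∧ ∀ x, 0 < x → x ≤ 1 →
      c₀ * x ^ (-u) ≤ cutSum b c x ∧ cutSum b c x ≤ C₀ * x ^ (-u) := by
  obtain ⟨u, hu⟩ := exists_sum_mul_rpow_eq_one hb0 hb1 hc
  obtain ⟨j₀, hj₀⟩ := Finite.exists_min b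
  obtain ⟨K₀, K₁, hK₀, hK₁, hK⟩ := exists_cutSum_bounds_of_lt hb0 hb1 hc (hb0 j₀)
  have hmin : 0 < min (b j₀ ^ (-u)) 1 := lt_min (Real.rpow_pos_of_pos (hb0 j₀) _) one_pos
  have hmax : 0 < max (b j₀ ^ (-u)) 1 := lt_max_of_lt_right one_pos
  refine ⟨u, K₀ / max (b j₀ ^ (-u)) 1, K₁ / min (b j₀ ^ (-u)) 1, div_pos hK₀ hmax,
    div_pos hK₁ hmin, fun x hx0 hx1 => renewal_bounds (hb0 j₀) hj₀ hb1 (fun j => (hc j).le) hu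
      (fun y _ hy => cutSum_eq_sum_mul_cutSum_div hb0 hb1 fun j => hy.trans (hj₀ j))
      (fun y hy hy1 => ?_) hx0 hx1⟩
  obtain ⟨hlo, hhi⟩ := rpow_mem_Icc_min_max (hb0 j₀) hy.le hy1 (-u)
  constructor
  · calc K₀ / max (b j₀ ^ (-u)) 1 * y ^ (-u)
        ≤ K₀ / max (b j₀ ^ (-u)) 1 * max (b j₀ ^ (-u)) 1 := by gcongr
      _ = K₀ := div_mul_cancel₀ _ hmax.ne'
      _ ≤ cutSum b c y := (hK y hy hy1).1
  · calc cutSum b c y ≤ K₁ := (hK y hy hy1).2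
      _ = K₁ / min (b j₀ ^ (-u)) 1 * min (b j₀ ^ (-u)) 1 := (div_mul_cancel₀ _ hmin.ne').symm
      _ ≤ K₁ / min (b j₀ ^ (-u)) 1 * y ^ (-u) := by gcongr

end cut

def aspectRatio (a : Alph m n → ℝ) (b : Fin m → ℝ) (w : List (Alph m n)) : ℝ :=
  aP a w / bP b (w.map Sigma.fst)

def wordWeight (a p : Alph m n → ℝ) (r t : ℝ) (w : List (Alph m n)) : ℝ :=
  (pP p w * aP a w ^ r) ^ t

section psi
variable {a : Alph m n → ℝ} {b : Fin m → ℝ} {p : Alph m n → ℝ} {r t : ℝ}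

theorem aspectRatio_append (w w' : List (Alph m n)) :
    aspectRatio a b (w ++ w') = aspectRatio a b w * aspectRatio a b w' := by
  simp [aspectRatio, aP, mul_div_mul_comm]

theorem aspectRatio_pos (ha : ∀ g, 0 < a g) (hb0 : ∀ j, 0 < b j) (w : List (Alph m n)) :
    0 < aspectRatio a b w :=
  div_pos (prod_map_pos ha w) (bP_pos hb0 _)

theorem aspectRatio_le_one (ha : ∀ g, 0 ≤ a g) (hab : ∀ g, a g ≤ b g.1) (hb0 : ∀ j, 0 < b j)
    (w : List (Alph m n)) : aspectRatio a b w ≤ 1 := by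
  refine div_le_one_of_le₀ ?_ (bP_pos hb0 _).le
  simpa [aP, bP] using List.prod_map_le_prod_map₀ a (b ∘ Sigma.fst) (fun g _ => ha g)
    (fun g _ => hab g)

theorem mem_Psi_iff (hb0 : ∀ j, 0 < b j) {k : ℕ} {σ : Wd m n} :
    σ ∈ Psi a b k ↔ σ.1.length = k ∧ σ.2 ∈ cutSet b (aspectRatio a b σ.1) := by
  simp only [Psi, cutSet, aspectRatio, Set.mem_ofPred_eq]
  refine and_congr_right fun _ => and_congr_right fun hlen => ?_
  have hy := bP_pos hb0 (σ.1.map Sigma.fst)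
  rw [sy, List.dropLast_append_of_ne_nil (List.ne_nil_of_length_pos hlen), bP_append, bP_append,
    lt_div_iff₀ hy, div_le_iff₀ hy, mul_comm (bP b σ.2), mul_comm (bP b σ.2.dropLast)]
  exact and_comm

theorem Psi_finite (hb0 : ∀ j, 0 < b j) (hb1 : ∀ j, b j < 1) (k : ℕ) : (Psi a b k).Finite := by
  refine ((List.finite_length_eq _ k).biUnion fun w _ =>
    (Set.finite_singleton w).prod (cutSet_finite hb0 hb1 (aspectRatio a b w))).subset ?_
  intro σ hσ
  obtain ⟨hlen, hcut⟩ := (mem_Psi_iff hb0).1 hσ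
  exact Set.mem_biUnion hlen (Set.mem_prod.2 ⟨rfl, hcut⟩)

theorem Er_rpow (ha : ∀ g, 0 ≤ a g) (hp : ∀ g, 0 ≤ p g) (σ : Wd m n) :
    Er a p r σ ^ t = wordWeight a p r t σ.1 * (σ.2.map (qf p · ^ t)).prod := by
  have hpP : 0 ≤ pP p σ.1 := prod_map_nonneg hp σ.1
  have haP : 0 ≤ aP a σ.1 := prod_map_nonneg ha σ.1
  have hq (j : Fin m) : 0 ≤ qf p j := Finset.sum_nonneg fun i _ => hp _
  rw [Real.list_prod_map_rpow' _ _ (fun j _ => hq j), Er, qP, mul_right_comm,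
    Real.mul_rpow (by positivity) (prod_map_nonneg hq σ.2), wordWeight]

theorem wordWeight_nonneg (ha : ∀ g, 0 ≤ a g) (hp : ∀ g, 0 ≤ p g) (w : List (Alph m n)) :
    0 ≤ wordWeight a p r t w :=
  Real.rpow_nonneg (mul_nonneg (prod_map_nonneg hp w) (Real.rpow_nonneg (prod_map_nonneg ha w) r)) t

theorem wordWeight_append (ha : ∀ g, 0 ≤ a g) (hp : ∀ g, 0 ≤ p g) (w w' : List (Alph m n)) :
    wordWeight a p r t (w ++ w') = wordWeight a p r t w * wordWeight a p r t w' := by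
  have hpP := prod_map_nonneg hp
  have haP := prod_map_nonneg ha
  simp only [wordWeight, pP, aP, List.map_append, List.prod_append]
  rw [Real.mul_rpow (haP w) (haP w'), mul_mul_mul_comm,
    Real.mul_rpow (mul_nonneg (hpP w) (Real.rpow_nonneg (haP w) r))
      (mul_nonneg (hpP w') (Real.rpow_nonneg (haP w') r))]

theorem Ih_eq_sum_words (ha : ∀ g, 0 ≤ a g) (hb0 : ∀ j, 0 < b j) (hb1 : ∀ j, b j < 1)
    (hp : ∀ g, 0 ≤ p g) (k : ℕ) :
    Ih a b p r k t =
      ∑ w ∈ words _ k, wordWeight a p r t w * cutSum b (qf p · ^ t) (aspectRatio a b w) := by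
  have hfin := Psi_finite (a := a) hb0 hb1 k
  rw [Ih, ← hfin.coe_toFinset, Finset.tsum_subtype' _ fun σ => Er a p r σ ^ t]
  simp_rw [Er_rpow ha hp, cutSum_eq_sum hb0 hb1, Finset.mul_sum]
  exact Finset.sum_finset_product' _ (words _ k)
    (fun w => (cutSet_finite hb0 hb1 (aspectRatio a b w)).toFinset)
    (f := fun w (τ : List (Fin m)) => wordWeight a p r t w * (τ.map (qf p · ^ t)).prod)
    fun σ => by rw [Set.Finite.mem_toFinset, mem_Psi_iff hb0, mem_words, Set.Finite.mem_toFinset]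

end psi

theorem stmt13_general
    (m : ℕ) (hm : 2 ≤ m) (n : Fin m → ℕ) (hn : ∀ j, 1 ≤ n j)
    (a : Alph m n → ℝ) (b : Fin m → ℝ)
    (hab : ∀ g : Alph m n, 0 < a g ∧ a g < b g.1 ∧ b g.1 < 1)
    (p : Alph m n → ℝ) (hp : ∀ g, 0 < p g)
    (r : ℝ)
    (t : ℝ) :
    ∃ h1 h2 : ℝ, 0 < h1 ∧ 0 < h2 ∧ ∀ k l : ℕ, 1 ≤ k → 1 ≤ l →
      h2 * Ih a b p r k t * Ih a b p r l t ≤ Ih a b p r (k + l) t ∧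
      Ih a b p r (k + l) t ≤ h1 * Ih a b p r k t * Ih a b p r l t := by
  have : NeZero m := ⟨by omega⟩
  have ha g : 0 < a g := (hab g).1
  have hb0 j : 0 < b j := (hab ⟨j, ⟨0, hn j⟩⟩).1.trans (hab _).2.1
  have hb1 j : b j < 1 := (hab ⟨j, ⟨0, hn j⟩⟩).2.2
  have hq j : 0 < qf p j ^ t :=
    Real.rpow_pos_of_pos (Finset.sum_pos (fun i _ => hp _) ⟨⟨0, hn j⟩, Finset.mem_univ _⟩) t
  obtain ⟨u, c, C, hc, hC, hQ⟩ := exists_cutSum_rpow_bounds hb0 hb1 hq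
  refine ⟨C / c ^ 2, c / C ^ 2, by positivity, by positivity, fun k l _ _ => ?_⟩
  simp_rw [Ih_eq_sum_words (ha · |>.le) hb0 hb1 (hp · |>.le), mul_assoc]
  exact sum_words_add_bounds (mul_comp_append_bounds hc hQ
    (wordWeight_nonneg (ha · |>.le) (hp · |>.le)) (wordWeight_append (ha · |>.le) (hp · |>.le))
    (aspectRatio_pos ha hb0) (aspectRatio_le_one (ha · |>.le) (hab · |>.2.1.le) hb0)
    aspectRatio_append) k l

theorem stmt13
    (m : ℕ) (hm : 2 ≤ m) (n : Fin m → ℕ) (hn : ∀ j, 1 ≤ n j)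
    (a : Alph m n → ℝ) (b : Fin m → ℝ)
    (hab : ∀ g : Alph m n, 0 < a g ∧ a g < b g.1 ∧ b g.1 < 1)
    (p : Alph m n → ℝ) (hp : ∀ g, 0 < p g) (hp1 : ∑ g : Alph m n, p g = 1)
    (r : ℝ) (hr : 0 < r)
    (t : ℝ) (ht : 0 ≤ t) :
    ∃ h1 h2 : ℝ, 0 < h1 ∧ 0 < h2 ∧ ∀ k l : ℕ, 1 ≤ k → 1 ≤ l →
      h2 * Ih a b p r k t * Ih a b p r l t ≤ Ih a b p r (k + l) t ∧
      Ih a b p r (k + l) t ≤ h1 * Ih a b p r k t * Ih a b p r l t :=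
  stmt13_general m hm n hn a b hab p hp r t

end

end LGQ
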